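/- arXiv:1803.11414 — 4 statements merged into one kernel-verified Lean document; each statement's English description precedes it below -/
import Mathlib

section
/- For every parallelized quantum 2-tester (Π₁, Π₂) with Π₁ + Π₂ = I₈ ⊗ X, there exists a parallelized quantum 2-tester (Π₁', Π₂') with Π₁' + Π₂' = I₈ ⊗ X' such that (1/2)·Tr(M₁Π₁' + M₂Π₂') = (1/2)·Tr(M₁Π₁ + M₂Π₂) and X' commutes with B⊗B⊗B for every B ∈ SU(2). Consequently the optimal average success probability of (1,1)-equivalence determination under parallelized schemes is achieved with such a commuting X. -/
open MeasureTheory Matrix ComplexOrder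

noncomputable section

/-- `SU(2)`: the special unitary group of 2×2 complex matrices. -/
abbrev SU2 := Matrix.specialUnitaryGroup (Fin 2) ℂ

instance : MeasurableSpace SU2 := borel SU2

abbrev Q := Fin 2

abbrev Mat2 := Matrix Q Q ℂ

/-- The rank-one outer product `|v⟩⟨v|`. -/
def outer {n : Type*} (v : n → ℂ) : Matrix n n ℂ :=
  fun a b => v a * (starRingEnd ℂ) (v b)

/-- Index of the three-qubit factor `K1⊗K2⊗K3` (or `H1⊗H2⊗H3`). -/
abbrev Idx3 := Q × Q × Q

abbrev Mat8 := Matrix Idx3 Idx3 ℂ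

/-- Index of the six-qubit space `K1⊗K2⊗K3⊗H1⊗H2⊗H3`. -/
abbrev Idx6 := Idx3 × Idx3

abbrev Mat64 := Matrix Idx6 Idx6 ℂ

/-- Kronecker product of three qubit operators. -/
def kron3 (A B C : Mat2) : Mat8 :=
  fun p q => A p.1 q.1 * B p.2.1 q.2.1 * C p.2.2 q.2.2

/-- The unnormalized maximally entangled vector `|I⟩⟩ = Σ |ijk⟩⊗|ijk⟩`. -/
def ketI : Idx6 → ℂ := fun p => if p.1 = p.2 then 1 else 0

/-- `W ⊗ I₈`. -/
def WtI (W : Mat8) : Mat64 := fun p q => W p.1 q.1 * (if p.2 = q.2 then 1 else 0)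

/-- `|W⟩⟩ = (W ⊗ I₈)|I⟩⟩`. -/
def ketW (W : Mat8) : Idx6 → ℂ := WtI W *ᵥ ketI

/-- `M₁ = ∫∫ |U₁⊗U₂⊗U₁⟩⟩⟨⟨U₁⊗U₂⊗U₁| dμ(U₁)dμ(U₂)`, the integral taken entrywise. -/
def M1 (μ : Measure SU2) : Mat64 := fun a b =>
  ∫ U₁ : SU2, ∫ U₂ : SU2, outer (ketW (kron3 U₁ U₂ U₁)) a b ∂μ ∂μ

/-- `M₂ = ∫∫ |U₁⊗U₂⊗U₂⟩⟩⟨⟨U₁⊗U₂⊗U₂| dμ(U₁)dμ(U₂)`, the integral taken entrywise. -/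
def M2 (μ : Measure SU2) : Mat64 := fun a b =>
  ∫ U₁ : SU2, ∫ U₂ : SU2, outer (ketW (kron3 U₁ U₂ U₂)) a b ∂μ ∂μ

/-- `I₈ ⊗ X` : identity on `K1⊗K2⊗K3` tensored with `X` on `H1⊗H2⊗H3`. -/
def IdKX (X : Mat8) : Mat64 := fun p q => (if p.1 = q.1 then 1 else 0) * X p.2 q.2

/-!
Twirling. Average the tester over the Haar measure of the action `B ↦ I₈ ⊗ B⊗B⊗B` of `SU(2)`
by conjugation: positivity, the trace of `X` and the shape `I₈ ⊗ X` survive the average, and by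
left invariance of `μ` the averaged `X` commutes with every `B⊗B⊗B`. The success probability is
unchanged because `M₁` and `M₂` are invariant under the action: `(I₈ ⊗ V)|W⟩⟩ = |W Vᵀ⟩⟩`, so
conjugating the integrand amounts to translating `U₁, U₂` on the right by `Bᵀ`, and a left
invariant probability measure on a compact group is also right invariant.
-/

namespace Matrix.specialUnitaryGroup

variable {n : Type*} [Fintype n] [DecidableEq n]

instance : IsTopologicalGroup (specialUnitaryGroup n ℂ) where
  continuous_inv := continuous_induced_rng.2 (continuous_star.comp continuous_subtype_val)

instance : CompactSpace (specialUnitaryGroup n ℂ) := by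
  have hbounded : (specialUnitaryGroup n ℂ : Set (Matrix n n ℂ)) ⊆
      Set.univ.pi fun _ => Set.univ.pi fun _ => Metric.closedBall (0 : ℂ) 1 :=
    fun A hA => Set.mem_univ_pi.2 fun i => Set.mem_univ_pi.2 fun j =>
      mem_closedBall_zero_iff.2 (entry_norm_bound_of_unitary hA.1 i j)
  have hclosed : IsClosed (specialUnitaryGroup n ℂ : Set (Matrix n n ℂ)) :=
    isClosed_unitary.inter (isClosed_eq continuous_id.matrix_det continuous_const)
  have hbox : IsCompact (Set.univ.pi fun (_ : n) => Set.univ.pi fun (_ : n) =>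
      Metric.closedBall (0 : ℂ) 1) :=
    isCompact_univ_pi fun _ => isCompact_univ_pi fun _ => isCompact_closedBall 0 1
  exact isCompact_iff_compactSpace.1 (hbox.of_isClosed_subset hclosed hbounded)

instance : SecondCountableTopology (specialUnitaryGroup n ℂ) :=
  haveI : SecondCountableTopology (Matrix n n ℂ) :=
    inferInstanceAs (SecondCountableTopology (n → n → ℂ))
  TopologicalSpace.secondCountableTopology_induced _ _ Subtype.val

def transpose (U : specialUnitaryGroup n ℂ) : specialUnitaryGroup n ℂ :=
  ⟨(U : Matrix n n ℂ)ᵀ, mem_specialUnitaryGroup_iff.2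
    ⟨transpose_mem_unitaryGroup_iff.2 U.2.1, (det_transpose _).trans U.2.2⟩⟩

end Matrix.specialUnitaryGroup

instance : BorelSpace SU2 := ⟨rfl⟩

theorem MeasureTheory.Measure.isMulRightInvariant_of_compactSpace {G : Type*} [Group G]
    [TopologicalSpace G] [IsTopologicalGroup G] [CompactSpace G] [MeasurableSpace G]
    [BorelSpace G] (μ : Measure G) [IsProbabilityMeasure μ] [μ.IsMulLeftInvariant] :
    μ.IsMulRightInvariant := by
  have : μ.IsHaarMeasure := isHaarMeasure_of_isCompact_nonempty_interior μ Set.univ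
    isCompact_univ (by simp) (by simp) (measure_ne_top μ _)
  refine ⟨fun g => ?_⟩
  have : IsProbabilityMeasure (μ.map (· * g)) :=
    isProbabilityMeasure_map (measurable_mul_const g).aemeasurable
  exact isHaarMeasure_eq_of_isProbabilityMeasure _ μ

section EntrywiseIntegral

variable {X : Type*} [MeasurableSpace X] (μ : Measure X) {m n : Type*}

def entrywiseIntegral (f : X → Matrix m n ℂ) : Matrix m n ℂ := fun i j => ∫ x, f x i j ∂μ

variable {μ}

theorem Continuous.integrable_entries [TopologicalSpace X] [CompactSpace X]
    [OpensMeasurableSpace X] [IsFiniteMeasure μ] {f : X → Matrix m n ℂ} (hf : Continuous f)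
    (i : m) (j : n) : Integrable (fun x => f x i j) μ :=
  (hf.matrix_elem i j).integrable_of_hasCompactSupport (HasCompactSupport.of_compactSpace _)

theorem entrywiseIntegral_add {f g : X → Matrix m n ℂ}
    (hf : ∀ i j, Integrable (fun x => f x i j) μ) (hg : ∀ i j, Integrable (fun x => g x i j) μ) :
    entrywiseIntegral μ (fun x => f x + g x) = entrywiseIntegral μ f + entrywiseIntegral μ g := by
  ext i j
  exact integral_add (hf i j) (hg i j)

theorem entrywiseIntegral_comp_mul_left {G : Type*} [Group G] [MeasurableSpace G]
    [MeasurableMul G] (ν : Measure G) [ν.IsMulLeftInvariant] (f : G → Matrix m n ℂ) (g : G) :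
    entrywiseIntegral ν (fun x => f (g * x)) = entrywiseIntegral ν f := by
  ext i j
  exact integral_mul_left_eq_self (fun x => f x i j) g

theorem entrywiseIntegral_comp_mul_right {G : Type*} [Group G] [MeasurableSpace G]
    [MeasurableMul G] (ν : Measure G) [ν.IsMulRightInvariant] (f : G → Matrix m n ℂ) (g : G) :
    entrywiseIntegral ν (fun x => f (x * g)) = entrywiseIntegral ν f := by
  ext i j
  exact integral_mul_right_eq_self (fun x => f x i j) g

variable [Fintype m] [Fintype n] [DecidableEq m] [DecidableEq n]

theorem LinearMap.map_entrywiseIntegral_eq_integral (ℓ : Matrix m n ℂ →ₗ[ℂ] ℂ)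
    {f : X → Matrix m n ℂ} (hf : ∀ i j, Integrable (fun x => f x i j) μ) :
    ℓ (entrywiseIntegral μ f) = ∫ x, ℓ (f x) ∂μ := by
  obtain ⟨c, hc⟩ : ∃ c : m → n → ℂ, ∀ A, ℓ A = ∑ i, ∑ j, A i j * c i j := by
    refine ⟨fun i j => ℓ (Matrix.single i j 1), fun A => ?_⟩
    conv_lhs => rw [matrix_eq_sum_single A]
    simp only [map_sum]
    refine Finset.sum_congr rfl fun i _ => Finset.sum_congr rfl fun j _ => ?_
    rw [← smul_eq_mul, ← map_smul, smul_single, smul_eq_mul, mul_one]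
  simp only [hc]
  rw [integral_finsetSum _ fun i _ => integrable_finsetSum _ fun j _ => (hf i j).mul_const _]
  refine Finset.sum_congr rfl fun i _ => ?_
  rw [integral_finsetSum _ fun j _ => (hf i j).mul_const _]
  simp only [integral_mul_const]
  rfl

theorem LinearMap.map_entrywiseIntegral {p q : Type*} (L : Matrix m n ℂ →ₗ[ℂ] Matrix p q ℂ)
    {f : X → Matrix m n ℂ} (hf : ∀ i j, Integrable (fun x => f x i j) μ) :
    L (entrywiseIntegral μ f) = entrywiseIntegral μ fun x => L (f x) := by
  ext i j
  exact (entryLinearMap ℂ ℂ i j ∘ₗ L).map_entrywiseIntegral_eq_integral hf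

theorem entrywiseIntegral_posSemidef {f : X → Matrix n n ℂ}
    (hf : ∀ i j, Integrable (fun x => f x i j) μ) (hpos : ∀ x, (f x).PosSemidef) :
    (entrywiseIntegral μ f).PosSemidef := by
  refine posSemidef_iff_dotProduct_mulVec.2 ⟨?_, fun y => ?_⟩
  · ext i j
    simp only [entrywiseIntegral, conjTranspose_apply, Complex.star_def, ← integral_conj]
    exact integral_congr_ae (ae_of_all _ fun x => (hpos x).1.apply i j)
  · have hquad : star y ⬝ᵥ entrywiseIntegral μ f *ᵥ y = ∫ x, star y ⬝ᵥ f x *ᵥ y ∂μ :=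
      (dotProductBilin ℂ ℂ (star y) ∘ₗ (mulVecBilin ℂ ℂ).flip y).map_entrywiseIntegral_eq_integral
        hf
    rw [hquad]
    exact integral_nonneg fun x => (hpos x).dotProduct_mulVec_nonneg y

theorem trace_mul_entrywiseIntegral (M : Matrix n n ℂ) {f : X → Matrix n n ℂ}
    (hf : ∀ i j, Integrable (fun x => f x i j) μ) :
    (M * entrywiseIntegral μ f).trace = ∫ x, (M * f x).trace ∂μ :=
  (traceLinearMap n ℂ ℂ ∘ₗ LinearMap.mulLeft ℂ M).map_entrywiseIntegral_eq_integral hf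

theorem mul_entrywiseIntegral_mul (C D : Matrix n n ℂ) {f : X → Matrix n n ℂ}
    (hf : ∀ i j, Integrable (fun x => f x i j) μ) :
    C * entrywiseIntegral μ f * D = entrywiseIntegral μ fun x => C * f x * D :=
  (LinearMap.mulLeftRight ℂ (C, D)).map_entrywiseIntegral hf

end EntrywiseIntegral

open scoped Kronecker

section KroneckerRep

variable {G : Type*} [Monoid G] {m n : Type*} [Fintype m] [DecidableEq m] [Fintype n]
  [DecidableEq n]

def kroneckerRep (ρ : G →* unitaryGroup m ℂ) (σ : G →* unitaryGroup n ℂ) :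
    G →* unitaryGroup (m × n) ℂ where
  toFun g := ⟨(ρ g : Matrix m m ℂ) ⊗ₖ (σ g : Matrix n n ℂ), kronecker_mem_unitary (ρ g).2 (σ g).2⟩
  map_one' := Subtype.ext <| by simp only [map_one, UnitaryGroup.one_val, one_kronecker_one]
  map_mul' g h := Subtype.ext <| by simp only [map_mul, UnitaryGroup.mul_val, mul_kronecker_mul]

@[simp] theorem coe_kroneckerRep (ρ : G →* unitaryGroup m ℂ) (σ : G →* unitaryGroup n ℂ) (g : G) :
    (kroneckerRep ρ σ g : Matrix (m × n) (m × n) ℂ)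
      = (ρ g : Matrix m m ℂ) ⊗ₖ (σ g : Matrix n n ℂ) :=
  rfl

theorem continuous_kroneckerRep [TopologicalSpace G] {ρ : G →* unitaryGroup m ℂ}
    {σ : G →* unitaryGroup n ℂ} (hρ : Continuous ρ) (hσ : Continuous σ) :
    Continuous (kroneckerRep ρ σ) :=
  continuous_induced_rng.2 <| continuous_matrix fun i j =>
    show Continuous fun g => (ρ g : Matrix m m ℂ) i.1 j.1 * (σ g : Matrix n n ℂ) i.2 j.2 from
      ((continuous_subtype_val.comp hρ).matrix_elem _ _).mul
        ((continuous_subtype_val.comp hσ).matrix_elem _ _)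

end KroneckerRep

section Twirl

variable {G : Type*} [Group G] [MeasurableSpace G] (μ : Measure G) {m n : Type*} [Fintype m]
  [DecidableEq m] [Fintype n] [DecidableEq n]

def twirl (ρ : G →* unitaryGroup n ℂ) (A : Matrix n n ℂ) : Matrix n n ℂ :=
  entrywiseIntegral μ fun g => (ρ g : Matrix n n ℂ) * A * (ρ g : Matrix n n ℂ)ᴴ

variable [TopologicalSpace G] [CompactSpace G] [OpensMeasurableSpace G] [IsProbabilityMeasure μ]
  {μ} {ρ : G →* unitaryGroup n ℂ}

theorem integrable_conj_entries (hρ : Continuous ρ) (A : Matrix n n ℂ) (i j : n) :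
    Integrable (fun g => ((ρ g : Matrix n n ℂ) * A * (ρ g : Matrix n n ℂ)ᴴ) i j) μ :=
  have hρ' : Continuous fun g => (ρ g : Matrix n n ℂ) := continuous_subtype_val.comp hρ
  ((hρ'.matrix_mul continuous_const).matrix_mul hρ'.matrix_conjTranspose).integrable_entries i j

theorem twirl_posSemidef (hρ : Continuous ρ) {A : Matrix n n ℂ} (hA : A.PosSemidef) :
    (twirl μ ρ A).PosSemidef :=
  entrywiseIntegral_posSemidef (integrable_conj_entries hρ A) fun _ =>
    hA.mul_mul_conjTranspose_same _

theorem twirl_add (hρ : Continuous ρ) (A B : Matrix n n ℂ) :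
    twirl μ ρ (A + B) = twirl μ ρ A + twirl μ ρ B := by
  simp only [twirl, Matrix.mul_add, Matrix.add_mul]
  exact entrywiseIntegral_add (integrable_conj_entries hρ A) (integrable_conj_entries hρ B)

theorem trace_mul_twirl (hρ : Continuous ρ) {M : Matrix n n ℂ}
    (hM : ∀ g, (ρ g : Matrix n n ℂ) * M * (ρ g : Matrix n n ℂ)ᴴ = M) (A : Matrix n n ℂ) :
    (M * twirl μ ρ A).trace = (M * A).trace := by
  have hcycle (g : G) :
      (M * ((ρ g : Matrix n n ℂ) * A * (ρ g : Matrix n n ℂ)ᴴ)).trace = (M * A).trace := by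
    conv_rhs => rw [← hM g⁻¹]
    rw [map_inv, UnitaryGroup.inv_val, star_eq_conjTranspose, conjTranspose_conjTranspose,
      ← Matrix.mul_assoc, ← Matrix.mul_assoc, trace_mul_comm]
    simp only [Matrix.mul_assoc]
  rw [twirl, trace_mul_entrywiseIntegral _ (integrable_conj_entries hρ A)]
  simp only [hcycle, integral_const, probReal_univ, one_smul]

theorem trace_twirl (hρ : Continuous ρ) (A : Matrix n n ℂ) : (twirl μ ρ A).trace = A.trace := by
  simpa using trace_mul_twirl (μ := μ) hρ (M := 1)
    (fun g => by rw [Matrix.mul_one]; exact (ρ g).2.2) A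

theorem commute_twirl [MeasurableMul G] [μ.IsMulLeftInvariant] (hρ : Continuous ρ)
    (A : Matrix n n ℂ) (g : G) : Commute (ρ g : Matrix n n ℂ) (twirl μ ρ A) := by
  have hconj (h : G) : (ρ g : Matrix n n ℂ) * ((ρ h : Matrix n n ℂ) * A * (ρ h : Matrix n n ℂ)ᴴ) *
      (ρ g : Matrix n n ℂ)ᴴ = (ρ (g * h) : Matrix n n ℂ) * A * (ρ (g * h) : Matrix n n ℂ)ᴴ := by
    simp only [map_mul, UnitaryGroup.mul_val, conjTranspose_mul, Matrix.mul_assoc]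
  have hinv : (ρ g : Matrix n n ℂ) * twirl μ ρ A * (ρ g : Matrix n n ℂ)ᴴ = twirl μ ρ A := by
    rw [twirl, mul_entrywiseIntegral_mul _ _ (integrable_conj_entries hρ A)]
    simp only [hconj]
    exact entrywiseIntegral_comp_mul_left μ
      (fun h => (ρ h : Matrix n n ℂ) * A * (ρ h : Matrix n n ℂ)ᴴ) g
  calc (ρ g : Matrix n n ℂ) * twirl μ ρ A
      = (ρ g : Matrix n n ℂ) * twirl μ ρ A * ((ρ g : Matrix n n ℂ)ᴴ * ρ g) := by
        rw [← star_eq_conjTranspose, (ρ g).2.1, Matrix.mul_one]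
    _ = twirl μ ρ A * ρ g := by rw [← Matrix.mul_assoc, hinv]

theorem twirl_one_kronecker (hρ : Continuous ρ) (A : Matrix n n ℂ) :
    twirl μ (kroneckerRep (1 : G →* unitaryGroup m ℂ) ρ) ((1 : Matrix m m ℂ) ⊗ₖ A)
      = (1 : Matrix m m ℂ) ⊗ₖ twirl μ ρ A := by
  refine Eq.trans (congrArg (entrywiseIntegral μ) (funext fun g => ?_))
    ((kroneckerBilinear (R := ℂ) (1 : Matrix m m ℂ)).map_entrywiseIntegral
      (integrable_conj_entries hρ A)).symm
  simp only [coe_kroneckerRep, MonoidHom.one_apply, OneMemClass.coe_one, conjTranspose_kronecker,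
    conjTranspose_one, ← mul_kronecker_mul, Matrix.mul_one]
  rfl

end Twirl

theorem kron3_eq_kronecker (A B C : Mat2) : kron3 A B C = A ⊗ₖ (B ⊗ₖ C) := by
  ext p q
  simp [kron3, mul_assoc]

theorem IdKX_eq_one_kronecker (X : Mat8) : IdKX X = (1 : Mat8) ⊗ₖ X := by
  ext p q
  simp [IdKX, one_apply]

theorem ketW_eq_vec_transpose (W : Mat8) : ketW W = vec Wᵀ := by
  ext p
  simp [ketW, WtI, ketI, mulVec, dotProduct, vec, Fintype.sum_prod_type, mul_ite]

theorem ketW_apply (W : Mat8) (p : Idx6) : ketW W p = W p.1 p.2 := by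
  rw [ketW_eq_vec_transpose]
  rfl

theorem IdKX_mulVec_ketW (V W : Mat8) : IdKX V *ᵥ ketW W = ketW (W * Vᵀ) := by
  rw [IdKX_eq_one_kronecker, ketW_eq_vec_transpose, ketW_eq_vec_transpose, kronecker_mulVec_vec,
    transpose_one, Matrix.mul_one, transpose_mul, transpose_transpose]

theorem mul_outer_mul_conjTranspose {n : Type*} [Fintype n] (G : Matrix n n ℂ) (v : n → ℂ) :
    G * outer v * Gᴴ = outer (G *ᵥ v) := by
  change G * vecMulVec v (star v) * Gᴴ = vecMulVec (G *ᵥ v) (star (G *ᵥ v))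
  rw [mul_vecMulVec, vecMulVec_mul, star_mulVec]

theorem continuous_outer_ketW : Continuous fun W : Mat8 => outer (ketW W) := by
  refine continuous_matrix fun a b => ?_
  simp only [outer, ketW_apply]
  fun_prop

theorem continuous_kron3 {Y : Type*} [TopologicalSpace Y] {f g h : Y → Mat2} (hf : Continuous f)
    (hg : Continuous g) (hh : Continuous h) : Continuous fun y => kron3 (f y) (g y) (h y) := by
  refine continuous_matrix fun p q => ?_
  simp only [kron3]
  fun_prop

theorem outer_ketW_kron3_conj (B U₁ U₂ U₃ : Mat2) :
    IdKX (kron3 B B B) * outer (ketW (kron3 U₁ U₂ U₃)) * (IdKX (kron3 B B B))ᴴ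
      = outer (ketW (kron3 (U₁ * Bᵀ) (U₂ * Bᵀ) (U₃ * Bᵀ))) := by
  rw [mul_outer_mul_conjTranspose, IdKX_mulVec_ketW]
  simp only [kron3_eq_kronecker, ← kroneckerMap_transpose, mul_kronecker_mul]

def tensorCube : SU2 →* unitaryGroup Idx3 ℂ :=
  let ι : SU2 →* unitaryGroup Q ℂ := Submonoid.inclusion specialUnitaryGroup_le_unitaryGroup
  kroneckerRep ι (kroneckerRep ι ι)

theorem coe_tensorCube (B : SU2) : (tensorCube B : Mat8) = kron3 B B B := by
  rw [kron3_eq_kronecker]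
  rfl

theorem continuous_tensorCube : Continuous tensorCube :=
  have hι : Continuous
      (Submonoid.inclusion (specialUnitaryGroup_le_unitaryGroup (n := Q) (α := ℂ))) :=
    continuous_subtype_val.subtype_mk _
  continuous_kroneckerRep hι (continuous_kroneckerRep hι hι)

def idTensorCube : SU2 →* unitaryGroup Idx6 ℂ :=
  kroneckerRep 1 tensorCube

theorem coe_idTensorCube (B : SU2) : (idTensorCube B : Mat64) = IdKX (kron3 B B B) := by
  rw [IdKX_eq_one_kronecker, ← coe_tensorCube]
  rfl

theorem continuous_idTensorCube : Continuous idTensorCube :=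
  continuous_kroneckerRep continuous_const continuous_tensorCube

def choiAverage (ν : Measure (SU2 × SU2)) (π : SU2 × SU2 → SU2) : Mat64 :=
  entrywiseIntegral ν fun U => outer (ketW (kron3 U.1 U.2 (π U)))

section ChoiAverage

variable (ν : Measure (SU2 × SU2)) [IsFiniteMeasure ν] {π : SU2 × SU2 → SU2}

theorem continuous_outer_ketW_kron3 (hπ : Continuous π) :
    Continuous fun U : SU2 × SU2 => outer (ketW (kron3 U.1 U.2 (π U))) :=
  continuous_outer_ketW.comp <| continuous_kron3 (continuous_subtype_val.comp continuous_fst)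
    (continuous_subtype_val.comp continuous_snd) (continuous_subtype_val.comp hπ)

theorem choiAverage_conj [ν.IsMulRightInvariant] (hπ : Continuous π)
    (hπ_mul : ∀ U c, π (U * (c, c)) = π U * c) (B : SU2) :
    (idTensorCube B : Mat64) * choiAverage ν π * (idTensorCube B : Mat64)ᴴ = choiAverage ν π := by
  rw [coe_idTensorCube]
  let c := specialUnitaryGroup.transpose B
  have hshift (U : SU2 × SU2) :
      IdKX (kron3 B B B) * outer (ketW (kron3 U.1 U.2 (π U))) * (IdKX (kron3 B B B))ᴴ
        = outer (ketW (kron3 (U * (c, c)).1 (U * (c, c)).2 (π (U * (c, c))))) := by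
    rw [outer_ketW_kron3_conj, hπ_mul]
    rfl
  rw [choiAverage,
    mul_entrywiseIntegral_mul _ _ (continuous_outer_ketW_kron3 hπ).integrable_entries]
  simp only [hshift]
  exact entrywiseIntegral_comp_mul_right ν (fun U => outer (ketW (kron3 U.1 U.2 (π U)))) (c, c)

end ChoiAverage

theorem M1_eq_choiAverage (μ : Measure SU2) [IsProbabilityMeasure μ] :
    M1 μ = choiAverage (μ.prod μ) Prod.fst := by
  ext a b
  exact (integral_prod _ ((continuous_outer_ketW_kron3 continuous_fst).integrable_entries a b)).symm

theorem M2_eq_choiAverage (μ : Measure SU2) [IsProbabilityMeasure μ] :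
    M2 μ = choiAverage (μ.prod μ) Prod.snd := by
  ext a b
  exact (integral_prod _ ((continuous_outer_ketW_kron3 continuous_snd).integrable_entries a b)).symm

/-- Any parallelized tester can be replaced, without changing the average success
probability, by one whose normalization operator `X'` commutes with `B⊗B⊗B` for all
`B ∈ SU(2)`. -/
theorem symmetrize_X (μ : Measure SU2) [IsProbabilityMeasure μ] [μ.IsMulLeftInvariant]
    (P₁ P₂ : Mat64) (X : Mat8) (h₁ : P₁.PosSemidef) (h₂ : P₂.PosSemidef)
    (hX : X.PosSemidef) (hTr : X.trace = 1) (hsum : P₁ + P₂ = IdKX X) :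
    ∃ (P₁' P₂' : Mat64) (X' : Mat8),
      P₁'.PosSemidef ∧ P₂'.PosSemidef ∧ X'.PosSemidef ∧ X'.trace = 1 ∧
      P₁' + P₂' = IdKX X' ∧
      (1/2 : ℂ) * (M1 μ * P₁' + M2 μ * P₂').trace
        = (1/2 : ℂ) * (M1 μ * P₁ + M2 μ * P₂).trace ∧
      ∀ B : SU2, X' * kron3 B B B = kron3 B B B * X' := by
  have := μ.isMulRightInvariant_of_compactSpace
  refine ⟨twirl μ idTensorCube P₁, twirl μ idTensorCube P₂, twirl μ tensorCube X,
    twirl_posSemidef continuous_idTensorCube h₁, twirl_posSemidef continuous_idTensorCube h₂,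
    twirl_posSemidef continuous_tensorCube hX, (trace_twirl continuous_tensorCube X).trans hTr,
    ?_, ?_, fun B => ?_⟩
  · rw [← twirl_add continuous_idTensorCube, hsum, IdKX_eq_one_kronecker, IdKX_eq_one_kronecker,
      idTensorCube, twirl_one_kronecker continuous_tensorCube]
  · rw [trace_add, trace_add, M1_eq_choiAverage, M2_eq_choiAverage,
      trace_mul_twirl continuous_idTensorCube (choiAverage_conj _ continuous_fst fun _ _ => rfl),
      trace_mul_twirl continuous_idTensorCube (choiAverage_conj _ continuous_snd fun _ _ => rfl)]
  · rw [← coe_tensorCube]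
    exact (commute_twirl continuous_tensorCube X B).eq.symm
end
end

section
/- Weak duality for the equivalence-determination semidefinite program: let M₁, M₂ be Hermitian 64×64 matrices, let (Π₁, Π₂, Y, Y¹, Y⁰) be a feasible general-scheme tester, let λ be a real number, and let Ω (on K1⊗K2⊗K3⊗H1⊗H2⊗H3), Ω¹ (on K1⊗K2⊗H1⊗H2), Ω⁰ (on K1⊗H1) be positive semidefinite matrices satisfying, in the Loewner order: (1/2)M₁ ≤ Ω, (1/2)M₂ ≤ Ω, Tr_{K3}Ω ≤ I_{H3}⊗Ω¹ (identity on the H3 factor tensored with Ω¹ on the remaining factors), Tr_{K2}Ω¹ ≤ I_{H2}⊗Ω⁰, and Tr_{K1}Ω⁰ ≤ λ·I_{H1}. Then (1/2)·Tr(M₁Π₁ + M₂Π₂) ≤ λ. -/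
open MeasureTheory Matrix ComplexOrder

noncomputable section

/-- Index of `K1⊗K2⊗H1⊗H2⊗H3`. -/
abbrev IdxY := (Q × Q) × Idx3

abbrev MatY := Matrix IdxY IdxY ℂ

/-- Index of `K1⊗K2⊗H1⊗H2`. -/
abbrev IdxO1 := (Q × Q) × (Q × Q)

abbrev MatO1 := Matrix IdxO1 IdxO1 ℂ

/-- Index of `K1⊗H1⊗H2`. -/
abbrev IdxY1 := Q × Q × Q

abbrev MatY1 := Matrix IdxY1 IdxY1 ℂ

/-- Index of `K1⊗H1`. -/
abbrev IdxO0 := Q × Q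

abbrev MatO0 := Matrix IdxO0 IdxO0 ℂ

/-- Identity on the `K3` factor tensored with `Y` on the remaining factors. -/
def IdK3Y (Y : MatY) : Mat64 := fun p q =>
  (if p.1.2.2 = q.1.2.2 then 1 else 0) *
    Y ((p.1.1, p.1.2.1), p.2) ((q.1.1, q.1.2.1), q.2)

/-- Partial trace of `Y` over the `H3` factor. -/
def TrH3 (Y : MatY) : MatO1 := fun p q =>
  ∑ h3 : Q, Y (p.1, (p.2.1, p.2.2, h3)) (q.1, (q.2.1, q.2.2, h3))

/-- Identity on the `K2` factor tensored with `Y¹` on `K1⊗H1⊗H2`. -/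
def IdK2Y1 (Y1 : MatY1) : MatO1 := fun p q =>
  (if p.1.2 = q.1.2 then 1 else 0) * Y1 (p.1.1, p.2) (q.1.1, q.2)

/-- Partial trace of `Y¹` over the `H2` factor. -/
def TrH2 (Y1 : MatY1) : MatO0 := fun p q =>
  ∑ h2 : Q, Y1 (p.1, p.2, h2) (q.1, q.2, h2)

/-- Identity on the `K1` factor tensored with `Y⁰` on `H1`. -/
def IdK1Y0 (Y0 : Mat2) : MatO0 := fun p q =>
  (if p.1 = q.1 then 1 else 0) * Y0 p.2 q.2

/-- A feasible general-scheme tester `(Π₁, Π₂, Y, Y¹, Y⁰)`. -/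
def Feasible (P₁ P₂ : Mat64) (Y : MatY) (Y1 : MatY1) (Y0 : Mat2) : Prop :=
  P₁.PosSemidef ∧ P₂.PosSemidef ∧ Y.PosSemidef ∧ Y1.PosSemidef ∧ Y0.PosSemidef ∧
    P₁ + P₂ = IdK3Y Y ∧ TrH3 Y = IdK2Y1 Y1 ∧ TrH2 Y1 = IdK1Y0 Y0 ∧ Y0.trace = 1

/-- Partial trace of `Ω` over the `K3` factor. -/
def TrK3 (O : Mat64) : MatY := fun p q =>
  ∑ k3 : Q, O ((p.1.1, p.1.2, k3), p.2) ((q.1.1, q.1.2, k3), q.2)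

/-- Identity on the `H3` factor tensored with `Ω¹` on `K1⊗K2⊗H1⊗H2`. -/
def IdH3O1 (O1 : MatO1) : MatY := fun p q =>
  (if p.2.2.2 = q.2.2.2 then 1 else 0) *
    O1 (p.1, (p.2.1, p.2.2.1)) (q.1, (q.2.1, q.2.2.1))

/-- Partial trace of `Ω¹` over the `K2` factor. -/
def TrK2 (O1 : MatO1) : MatY1 := fun p q =>
  ∑ k2 : Q, O1 ((p.1, k2), p.2) ((q.1, k2), q.2)

/-- Identity on the `H2` factor tensored with `Ω⁰` on `K1⊗H1`. -/
def IdH2O0 (O0 : MatO0) : MatY1 := fun p q =>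
  (if p.2.2 = q.2.2 then 1 else 0) * O0 (p.1, p.2.1) (q.1, q.2.1)

/-- Partial trace of `Ω⁰` over the `K1` factor. -/
def TrK1 (O0 : MatO0) : Mat2 := fun p q => ∑ k1 : Q, O0 (k1, p) (k1, q)

/-!
Each dual constraint is tested against the matching primal variable: for positive semidefinite
`P`, `A ≤ B` gives `Tr (A P) ≤ Tr (B P)`, and partial traces are adjoint to tensoring with the
identity, `Tr (Ω (1 ⊗ Y)) = Tr (Tr₁ Ω · Y)`. Alternating these two facts walks down the chain
`Π₁ + Π₂ = 1 ⊗ Y`, `Tr_{H3} Y = 1 ⊗ Y¹`, `Tr_{H2} Y¹ = 1 ⊗ Y⁰` and ends at `Tr (λ Y⁰) = λ`.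
-/

open scoped Kronecker

namespace Matrix

section PosSemidef

variable {𝕜 : Type*} [RCLike 𝕜] {n : Type*} [Fintype n]

lemma PosSemidef.trace_mul_nonneg {A B : Matrix n n 𝕜} (hA : A.PosSemidef) (hB : B.PosSemidef) :
    0 ≤ (A * B).trace := by
  classical
  open MatrixOrder in
  obtain ⟨C, rfl⟩ := CStarAlgebra.nonneg_iff_eq_star_mul_self.mp hA.nonneg
  rw [Matrix.mul_assoc, trace_mul_comm]
  exact (hB.mul_mul_conjTranspose_same C).trace_nonneg

lemma PosSemidef.trace_mul_le_trace_mul {A B P : Matrix n n 𝕜} (hAB : (B - A).PosSemidef)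
    (hP : P.PosSemidef) : (A * P).trace ≤ (B * P).trace := by
  simpa [Matrix.sub_mul, trace_sub] using hAB.trace_mul_nonneg hP

end PosSemidef

section PartialTrace

variable {R : Type*} [CommSemiring R] {α β γ : Type*} [Fintype α] [Fintype β] [Fintype γ]

def traceFst (O : Matrix (α × β) (α × β) R) : Matrix β β R :=
  of fun b b' => ∑ a, O (a, b) (a, b')

lemma trace_submatrix_equiv (e : γ ≃ α) (A : Matrix α α R) : (A.submatrix e e).trace = A.trace :=
  Fintype.sum_equiv e _ _ fun _ => rfl

lemma trace_mul_one_kronecker [DecidableEq α] (O : Matrix (α × β) (α × β) R) (Y : Matrix β β R) :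
    (O * ((1 : Matrix α α R) ⊗ₖ Y)).trace = (traceFst O * Y).trace := by
  simp only [trace, diag_apply, mul_apply, kroneckerMap_apply, one_apply, ite_mul, one_mul,
    zero_mul, mul_ite, mul_zero, Fintype.sum_prod_type, Finset.sum_ite_irrel,
    Finset.sum_const_zero, Finset.sum_ite_eq', Finset.mem_univ, ↓reduceIte, traceFst, of_apply,
    Finset.sum_mul]
  rw [Finset.sum_comm]
  exact Finset.sum_congr rfl fun _ _ => Finset.sum_comm

lemma trace_mul_one_kronecker_submatrix [DecidableEq α] (e : γ ≃ α × β) (O : Matrix γ γ R)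
    (Y : Matrix β β R) :
    (O * ((1 : Matrix α α R) ⊗ₖ Y).submatrix e e).trace
      = (traceFst (O.submatrix e.symm e.symm) * Y).trace := by
  rw [← trace_mul_one_kronecker, ← trace_submatrix_equiv e, ← submatrix_mul_equiv _ _ _ e,
    submatrix_submatrix]
  simp

end PartialTrace

end Matrix

-- Each `split` moves one qubit factor to the front; along it the `Id…` operators are
-- definitionally `1 ⊗ₖ _` and the partial traces `Tr…` are `traceFst`.
def splitK3 : Idx6 ≃ Q × IdxY where
  toFun p := (p.1.2.2, ((p.1.1, p.1.2.1), p.2))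
  invFun x := ((x.2.1.1, x.2.1.2, x.1), x.2.2)
  left_inv _ := rfl
  right_inv _ := rfl

def splitH3 : IdxY ≃ Q × IdxO1 where
  toFun p := (p.2.2.2, (p.1, (p.2.1, p.2.2.1)))
  invFun x := (x.2.1, (x.2.2.1, x.2.2.2, x.1))
  left_inv _ := rfl
  right_inv _ := rfl

def splitK2 : IdxO1 ≃ Q × IdxY1 where
  toFun p := (p.1.2, (p.1.1, p.2))
  invFun x := ((x.2.1, x.1), x.2.2)
  left_inv _ := rfl
  right_inv _ := rfl

def splitH2 : IdxY1 ≃ Q × IdxO0 where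
  toFun p := (p.2.2, (p.1, p.2.1))
  invFun x := (x.2.1, x.2.2, x.1)
  left_inv _ := rfl
  right_inv _ := rfl

lemma trace_mul_IdK3Y (O : Mat64) (Y : MatY) : (O * IdK3Y Y).trace = (TrK3 O * Y).trace :=
  trace_mul_one_kronecker_submatrix splitK3 O Y

lemma trace_mul_IdH3O1 (Y : MatY) (O1 : MatO1) : (Y * IdH3O1 O1).trace = (TrH3 Y * O1).trace :=
  trace_mul_one_kronecker_submatrix splitH3 Y O1

lemma trace_mul_IdK2Y1 (O1 : MatO1) (Y1 : MatY1) :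
    (O1 * IdK2Y1 Y1).trace = (TrK2 O1 * Y1).trace :=
  trace_mul_one_kronecker_submatrix splitK2 O1 Y1

lemma trace_mul_IdH2O0 (Y1 : MatY1) (O0 : MatO0) :
    (Y1 * IdH2O0 O0).trace = (TrH2 Y1 * O0).trace :=
  trace_mul_one_kronecker_submatrix splitH2 Y1 O0

lemma trace_mul_IdK1Y0 (O0 : MatO0) (Y0 : Mat2) : (O0 * IdK1Y0 Y0).trace = (TrK1 O0 * Y0).trace :=
  trace_mul_one_kronecker O0 Y0

lemma trace_TrK3_mul_le_trace_TrK2_mul {O : Mat64} {O1 : MatO1} {Y : MatY} {Y1 : MatY1}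
    (hd : (IdH3O1 O1 - TrK3 O).PosSemidef) (hY : Y.PosSemidef) (hYY1 : TrH3 Y = IdK2Y1 Y1) :
    (TrK3 O * Y).trace ≤ (TrK2 O1 * Y1).trace :=
  calc (TrK3 O * Y).trace ≤ (IdH3O1 O1 * Y).trace := hd.trace_mul_le_trace_mul hY
    _ = (TrK2 O1 * Y1).trace := by
      rw [trace_mul_comm, trace_mul_IdH3O1, hYY1, trace_mul_comm, trace_mul_IdK2Y1]

lemma trace_TrK2_mul_le_trace_TrK1_mul {O1 : MatO1} {O0 : MatO0} {Y1 : MatY1} {Y0 : Mat2}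
    (hd : (IdH2O0 O0 - TrK2 O1).PosSemidef) (hY1 : Y1.PosSemidef) (hY1Y0 : TrH2 Y1 = IdK1Y0 Y0) :
    (TrK2 O1 * Y1).trace ≤ (TrK1 O0 * Y0).trace :=
  calc (TrK2 O1 * Y1).trace ≤ (IdH2O0 O0 * Y1).trace := hd.trace_mul_le_trace_mul hY1
    _ = (TrK1 O0 * Y0).trace := by
      rw [trace_mul_comm, trace_mul_IdH2O0, hY1Y0, trace_mul_comm, trace_mul_IdK1Y0]

theorem weak_duality_general (M₁ M₂ : Mat64)
    (P₁ P₂ : Mat64) (Y : MatY) (Y1 : MatY1) (Y0 : Mat2)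
    (hfeas : Feasible P₁ P₂ Y Y1 Y0)
    (lam : ℝ) (O : Mat64) (O1 : MatO1) (O0 : MatO0)
    (hd1 : (O - (1/2 : ℂ) • M₁).PosSemidef)
    (hd2 : (O - (1/2 : ℂ) • M₂).PosSemidef)
    (hd3 : (IdH3O1 O1 - TrK3 O).PosSemidef)
    (hd4 : (IdH2O0 O0 - TrK2 O1).PosSemidef)
    (hd5 : ((lam : ℂ) • (1 : Mat2) - TrK1 O0).PosSemidef) :
    (1/2 : ℂ) * (M₁ * P₁ + M₂ * P₂).trace ≤ (lam : ℂ) := by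
  obtain ⟨hP₁, hP₂, hY, hY1, hY0, hP, hYY1, hY1Y0, hY0_trace⟩ := hfeas
  calc (1/2 : ℂ) * (M₁ * P₁ + M₂ * P₂).trace
      = (((1/2 : ℂ) • M₁) * P₁).trace + (((1/2 : ℂ) • M₂) * P₂).trace := by
        simp only [smul_mul, trace_smul, trace_add, smul_eq_mul, mul_add]
    _ ≤ (O * P₁).trace + (O * P₂).trace :=
        add_le_add (hd1.trace_mul_le_trace_mul hP₁) (hd2.trace_mul_le_trace_mul hP₂)
    _ = (TrK3 O * Y).trace := by rw [← trace_add, ← Matrix.mul_add, hP, trace_mul_IdK3Y]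
    _ ≤ (TrK2 O1 * Y1).trace := trace_TrK3_mul_le_trace_TrK2_mul hd3 hY hYY1
    _ ≤ (TrK1 O0 * Y0).trace := trace_TrK2_mul_le_trace_TrK1_mul hd4 hY1 hY1Y0
    _ ≤ (((lam : ℂ) • (1 : Mat2)) * Y0).trace := hd5.trace_mul_le_trace_mul hY0
    _ = lam := by rw [smul_mul, Matrix.one_mul, trace_smul, hY0_trace, smul_eq_mul, mul_one]

/-- Weak duality for the equivalence-determination semidefinite program. -/
theorem weak_duality (M₁ M₂ : Mat64) (hM₁ : M₁.IsHermitian) (hM₂ : M₂.IsHermitian)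
    (P₁ P₂ : Mat64) (Y : MatY) (Y1 : MatY1) (Y0 : Mat2)
    (hfeas : Feasible P₁ P₂ Y Y1 Y0)
    (lam : ℝ) (O : Mat64) (O1 : MatO1) (O0 : MatO0)
    (hO : O.PosSemidef) (hO1 : O1.PosSemidef) (hO0 : O0.PosSemidef)
    (hd1 : (O - (1/2 : ℂ) • M₁).PosSemidef)
    (hd2 : (O - (1/2 : ℂ) • M₂).PosSemidef)
    (hd3 : (IdH3O1 O1 - TrK3 O).PosSemidef)
    (hd4 : (IdH2O0 O0 - TrK2 O1).PosSemidef)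
    (hd5 : ((lam : ℂ) • (1 : Mat2) - TrK1 O0).PosSemidef) :
    (1/2 : ℂ) * (M₁ * P₁ + M₂ * P₂).trace ≤ (lam : ℂ) :=
  weak_duality_general M₁ M₂ P₁ P₂ Y Y1 Y0 hfeas lam O O1 O0 hd1 hd2 hd3 hd4 hd5
end
end

section
/- The supremum of (1/2)·[⟨Φ|Π₁|Φ⟩ + (1/2)·Tr Π₂] over all pairs (Π₁, Π₂) of positive semidefinite 4×4 matrices satisfying Π₁ + Π₂ = I₂ ⊗ X for some positive semidefinite 2×2 matrix X with Tr X = 1, equals 7/8. (This is the optimal average success probability of equivalence determination when a full classical description of the candidate U₁ is given, no quantum sample of the Haar-random candidate U₂ is given, and the target box is used once.) -/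
open MeasureTheory Matrix ComplexOrder

noncomputable section

abbrev Idx2 := Q × Q

abbrev Mat4 := Matrix Idx2 Idx2 ℂ

/-- The unnormalized maximally entangled vector `|Φ⟩ = |00⟩ + |11⟩`. -/
def Phi : Idx2 → ℂ := fun p => if p.1 = p.2 then 1 else 0

/-- `I₂ ⊗ X` : identity on the first qubit factor tensored with `X` on the second. -/
def IdX (X : Mat2) : Mat4 := fun p q => (if p.1 = q.1 then 1 else 0) * X p.2 q.2

/-! Write t = ⟨Φ|Π₁|Φ⟩. From Π₁ + Π₂ = I₂ ⊗ X one gets Tr Π₁ + Tr Π₂ = 2 Tr X = 2 and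
t + ⟨Φ|Π₂|Φ⟩ = Tr X = 1, so t ≤ 1. A positive semidefinite matrix lies below its trace times
the identity, so t ≤ ⟨Φ|Φ⟩ Tr Π₁ = 2 Tr Π₁. Hence the success probability
(2t + 2 - Tr Π₁)/4 is at most (2 + 3t/2)/4 ≤ 7/8, with equality for Π₁ = |Φ⟩⟨Φ|/4,
X = I₂/2 and Π₂ = I₂ ⊗ X - Π₁ = (Tr(|Φ⟩⟨Φ|) I - |Φ⟩⟨Φ|)/4, which is positive semidefinite
by the same trace bound. -/

/-- In an eigenbasis of `A`, `A.trace • 1 - A` is diagonal with entries `∑_{j ≠ i} λⱼ ≥ 0`. -/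
theorem Matrix.PosSemidef.posSemidef_trace_smul_one_sub {n 𝕜 : Type*} [Fintype n] [DecidableEq n]
    [RCLike 𝕜] {A : Matrix n n 𝕜} (hA : A.PosSemidef) : (A.trace • 1 - A).PosSemidef := by
  set ev := hA.1.eigenvalues
  have hconj : A.trace • 1 - A = Unitary.conjStarAlgAut 𝕜 _ hA.1.eigenvectorUnitary
      (diagonal fun i => A.trace - ev i) := by
    rw [show (diagonal fun i => A.trace - ev i) = A.trace • 1 - diagonal (RCLike.ofReal ∘ ev) by
      rw [← diagonal_one, ← diagonal_smul, diagonal_sub]; simp]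
    rw [map_sub, map_smul, map_one, ← hA.1.spectral_theorem]
  rw [hconj, Unitary.conjStarAlgAut_apply, Unitary.isUnit_coe.posSemidef_star_right_conjugate_iff,
    posSemidef_diagonal_iff, hA.1.trace_eq_sum_eigenvalues]
  intro i
  rw [sub_nonneg]
  exact_mod_cast Finset.single_le_sum (fun j _ => hA.eigenvalues_nonneg j) (Finset.mem_univ i)

theorem Matrix.PosSemidef.dotProduct_mulVec_le_mul_trace {n 𝕜 : Type*} [Fintype n]
    [RCLike 𝕜] {A : Matrix n n 𝕜} (hA : A.PosSemidef) (v : n → 𝕜) :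
    star v ⬝ᵥ (A *ᵥ v) ≤ (star v ⬝ᵥ v) * A.trace := by
  classical
  have := hA.posSemidef_trace_smul_one_sub.dotProduct_mulVec_nonneg v
  rwa [sub_mulVec, dotProduct_sub, smul_mulVec, one_mulVec, dotProduct_smul, smul_eq_mul,
    mul_comm, sub_nonneg] at this

lemma posSemidef_outer {n : Type*} [Fintype n] (v : n → ℂ) : (outer v).PosSemidef :=
  posSemidef_vecMulVec_self_star v

lemma star_Phi_dotProduct_Phi : star Phi ⬝ᵥ Phi = 2 := by
  simp [Phi, dotProduct, Fintype.sum_prod_type]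

lemma trace_outer_Phi : (outer Phi).trace = 2 := by
  simp [outer, Phi, trace, Fintype.sum_prod_type]

lemma star_Phi_dotProduct_IdX_mulVec (X : Mat2) : star Phi ⬝ᵥ (IdX X *ᵥ Phi) = X.trace := by
  simp [dotProduct, mulVec, trace, Fintype.sum_prod_type, Fin.sum_univ_two, Phi, IdX]

lemma trace_IdX (X : Mat2) : (IdX X).trace = 2 * X.trace := by
  simp [trace, Fintype.sum_prod_type, Fin.sum_univ_two, IdX]
  ring

lemma IdX_smul_one (c : ℂ) : IdX (c • 1) = c • 1 := by
  ext ⟨a, b⟩ ⟨a', b'⟩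
  by_cases a = a' <;> simp [IdX, one_apply, Prod.ext_iff, *]

lemma star_Phi_dotProduct_outer_Phi_mulVec : star Phi ⬝ᵥ (outer Phi *ᵥ Phi) = 4 := by
  simp [dotProduct, mulVec, outer, Fintype.sum_prod_type, Phi]
  norm_num

lemma success_le_seven_eighths {P₁ P₂ : Mat4} {X : Mat2} (hP₁ : P₁.PosSemidef)
    (hP₂ : P₂.PosSemidef) (hX : X.trace = 1) (hsum : P₁ + P₂ = IdX X) :
    (1/2 : ℂ) * (star Phi ⬝ᵥ (P₁ *ᵥ Phi) + (1/2 : ℂ) * P₂.trace) ≤ 7/8 := by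
  have hfid : star Phi ⬝ᵥ (P₁ *ᵥ Phi) + star Phi ⬝ᵥ (P₂ *ᵥ Phi) = 1 := by
    rw [← dotProduct_add, ← add_mulVec, hsum, star_Phi_dotProduct_IdX_mulVec, hX]
  have htrace : P₁.trace + P₂.trace = 2 := by
    rw [← trace_add, hsum, trace_IdX, hX, mul_one]
  have hfid_le_one : star Phi ⬝ᵥ (P₁ *ᵥ Phi) ≤ 1 :=
    hfid ▸ le_add_of_nonneg_right (hP₂.dotProduct_mulVec_nonneg Phi)
  have hfid_le_trace := hP₁.dotProduct_mulVec_le_mul_trace Phi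
  rw [star_Phi_dotProduct_Phi] at hfid_le_trace
  linear_combination (3/8 : ℂ) * hfid_le_one + (1/8 : ℂ) * hfid_le_trace + (1/4 : ℂ) * htrace

lemma success_eq_seven_eighths_at_optimum :
    (1/2 : ℂ) * (star Phi ⬝ᵥ (((1/4 : ℂ) • outer Phi) *ᵥ Phi)
      + (1/2 : ℂ) * ((1/4 : ℂ) • ((outer Phi).trace • 1 - outer Phi)).trace) = 7/8 := by
  simp only [smul_mulVec, dotProduct_smul, star_Phi_dotProduct_outer_Phi_mulVec, trace_smul,
    trace_sub, trace_one, trace_outer_Phi, smul_eq_mul]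
  norm_num

/-- The optimal average success probability of equivalence determination with a full
classical description of `U₁`, no quantum sample of the Haar-random `U₂`, and a single
use of the target box, is `7/8`. -/
theorem known_U1_no_sample_optimum :
    IsLUB {p : ℝ | ∃ (P₁ P₂ : Mat4) (X : Mat2),
      P₁.PosSemidef ∧ P₂.PosSemidef ∧ X.PosSemidef ∧ X.trace = 1 ∧
      P₁ + P₂ = IdX X ∧
      (1/2 : ℂ) * (star Phi ⬝ᵥ (P₁ *ᵥ Phi) + (1/2 : ℂ) * P₂.trace) = (p : ℂ)}
      (7/8) := by
  refine IsGreatest.isLUB ⟨?_, ?_⟩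
  · have hP₁ : ((1/4 : ℂ) • outer Phi).PosSemidef :=
      (posSemidef_outer Phi).smul (by norm_num [Complex.le_def])
    have hP₂ : ((1/4 : ℂ) • ((outer Phi).trace • 1 - outer Phi)).PosSemidef :=
      (posSemidef_outer Phi).posSemidef_trace_smul_one_sub.smul (by norm_num [Complex.le_def])
    have hX : ((1/2 : ℂ) • (1 : Mat2)).PosSemidef :=
      PosSemidef.one.smul (by norm_num [Complex.le_def])
    refine ⟨_, _, _, hP₁, hP₂, hX, ?_, ?_, ?_⟩
    · simp
    · rw [IdX_smul_one, ← smul_add, add_sub_cancel, trace_outer_Phi, smul_smul]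
      norm_num
    · push_cast
      exact success_eq_seven_eighths_at_optimum
  · rintro p ⟨P₁, P₂, X, hP₁, hP₂, -, hX, hsum, hp⟩
    have hle := hp ▸ success_le_seven_eighths hP₁ hP₂ hX hsum
    exact Complex.real_le_real.mp (by push_cast; exact hle)

end
end

section
/- Let M be a 4×4 complex matrix on ℂ²⊗ℂ² such that M·(A ⊗ conj(A)) = (A ⊗ conj(A))·M for every A ∈ SU(2), where conj(A) is the entrywise complex conjugate of A. Then there exist complex numbers a, b such that M = a·|Φ⟩⟨Φ| + b·I₄, where |Φ⟩ = |00⟩ + |11⟩. -/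
open MeasureTheory Matrix ComplexOrder

noncomputable section

/-- Kronecker product of two qubit operators. -/
def kron2 (A B : Mat2) : Mat4 := fun p q => A p.1 q.1 * B p.2 q.2

def Dm : Mat2 := !![Complex.I, 0; 0, -Complex.I]
def Sm : Mat2 := !![0, 1; -1, 0]
def Rm : Mat2 := !![3/5, 4/5; -4/5, 3/5]
def Tm : Mat2 := !![3/5, 4/5*Complex.I; 4/5*Complex.I, 3/5]

theorem hDmem : Dm ∈ Matrix.specialUnitaryGroup (Fin 2) ℂ := by
  rw [Matrix.mem_specialUnitaryGroup_iff]
  refine ⟨?_, ?_⟩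
  · rw [Matrix.mem_unitaryGroup_iff]
    ext i j
    fin_cases i <;> fin_cases j <;>
      simp [Dm, Matrix.mul_apply, Fin.sum_univ_two, Matrix.one_apply,
        Matrix.star_apply, Complex.ext_iff] <;> ring_nf <;> norm_num
  · simp [Dm, Matrix.det_fin_two] <;> ring_nf <;> norm_num [Complex.ext_iff] <;> ring_nf

theorem hSmem : Sm ∈ Matrix.specialUnitaryGroup (Fin 2) ℂ := by
  rw [Matrix.mem_specialUnitaryGroup_iff]
  refine ⟨?_, ?_⟩
  · rw [Matrix.mem_unitaryGroup_iff]
    ext i j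
    fin_cases i <;> fin_cases j <;>
      simp [Sm, Matrix.mul_apply, Fin.sum_univ_two, Matrix.one_apply,
        Matrix.star_apply, Complex.ext_iff] <;> ring_nf <;> norm_num
  · simp [Sm, Matrix.det_fin_two] <;> ring_nf <;> norm_num [Complex.ext_iff] <;> ring_nf

theorem hRmem : Rm ∈ Matrix.specialUnitaryGroup (Fin 2) ℂ := by
  rw [Matrix.mem_specialUnitaryGroup_iff]
  refine ⟨?_, ?_⟩
  · rw [Matrix.mem_unitaryGroup_iff]
    ext i j
    fin_cases i <;> fin_cases j <;>
      simp [Rm, Matrix.mul_apply, Fin.sum_univ_two, Matrix.one_apply,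
        Matrix.star_apply, Complex.ext_iff] <;> ring_nf <;> norm_num
  · simp [Rm, Matrix.det_fin_two] <;> ring_nf <;> norm_num [Complex.ext_iff] <;> ring_nf

theorem hTmem : Tm ∈ Matrix.specialUnitaryGroup (Fin 2) ℂ := by
  rw [Matrix.mem_specialUnitaryGroup_iff]
  refine ⟨?_, ?_⟩
  · rw [Matrix.mem_unitaryGroup_iff]
    ext i j
    fin_cases i <;> fin_cases j <;>
      simp [Tm, Matrix.mul_apply, Fin.sum_univ_two, Matrix.one_apply,
        Matrix.star_apply, Complex.ext_iff] <;> ring_nf <;> norm_num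
  · simp [Tm, Matrix.det_fin_two] <;> ring_nf <;> norm_num [Complex.ext_iff] <;> ring_nf

set_option maxHeartbeats 2000000 in
/-- Structure of operators commuting with `A ⊗ conj(A)` for all `A ∈ SU(2)`. -/
theorem commutant_A_conjA (M : Mat4)
    (hM : ∀ A : SU2,
      M * kron2 A ((A : Mat2).map (starRingEnd ℂ))
        = kron2 A ((A : Mat2).map (starRingEnd ℂ)) * M) :
    ∃ a b : ℂ, M = a • outer Phi + b • (1 : Mat4) := by
  have hD := hM ⟨Dm, hDmem⟩
  have hS := hM ⟨Sm, hSmem⟩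
  have hR := hM ⟨Rm, hRmem⟩
  have hT := hM ⟨Tm, hTmem⟩
  have d1 := congrFun (congrFun hD ((0:Q),(0:Q))) ((0:Q),(1:Q))
  have d2 := congrFun (congrFun hD ((0:Q),(0:Q))) ((1:Q),(0:Q))
  have d3 := congrFun (congrFun hD ((1:Q),(1:Q))) ((0:Q),(1:Q))
  have d4 := congrFun (congrFun hD ((1:Q),(1:Q))) ((1:Q),(0:Q))
  have d5 := congrFun (congrFun hD ((0:Q),(1:Q))) ((0:Q),(0:Q))
  have d6 := congrFun (congrFun hD ((0:Q),(1:Q))) ((1:Q),(1:Q))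
  have d7 := congrFun (congrFun hD ((1:Q),(0:Q))) ((0:Q),(0:Q))
  have d8 := congrFun (congrFun hD ((1:Q),(0:Q))) ((1:Q),(1:Q))
  have s1 := congrFun (congrFun hS ((0:Q),(0:Q))) ((0:Q),(0:Q))
  have s2 := congrFun (congrFun hS ((0:Q),(0:Q))) ((1:Q),(1:Q))
  have s3 := congrFun (congrFun hS ((0:Q),(1:Q))) ((0:Q),(1:Q))
  have s4 := congrFun (congrFun hS ((0:Q),(1:Q))) ((1:Q),(0:Q))
  have r1 := congrFun (congrFun hR ((0:Q),(0:Q))) ((0:Q),(1:Q))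
  have t1 := congrFun (congrFun hT ((0:Q),(0:Q))) ((0:Q),(1:Q))
  simp [Matrix.mul_apply, Fintype.sum_prod_type, Fin.sum_univ_two, kron2,
    Matrix.map_apply, Dm, Sm, Rm, Tm, map_ofNat,
    map_div₀] at d1 d2 d3 d4 d5 d6 d7 d8 s1 s2 s3 s4 r1 t1
  have z1 : M ((0:Q),(0:Q)) ((0:Q),(1:Q)) = 0 := by linear_combination -d1/2
  have z2 : M ((0:Q),(0:Q)) ((1:Q),(0:Q)) = 0 := by linear_combination -d2/2
  have z3 : M ((1:Q),(1:Q)) ((0:Q),(1:Q)) = 0 := by linear_combination -d3/2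
  have z4 : M ((1:Q),(1:Q)) ((1:Q),(0:Q)) = 0 := by linear_combination -d4/2
  have z5 : M ((0:Q),(1:Q)) ((0:Q),(0:Q)) = 0 := by linear_combination d5/2
  have z6 : M ((0:Q),(1:Q)) ((1:Q),(1:Q)) = 0 := by linear_combination d6/2
  have z7 : M ((1:Q),(0:Q)) ((0:Q),(0:Q)) = 0 := by linear_combination d7/2
  have z8 : M ((1:Q),(0:Q)) ((1:Q),(1:Q)) = 0 := by linear_combination d8/2
  have e1 : M ((0:Q),(0:Q)) ((0:Q),(0:Q)) - M ((0:Q),(0:Q)) ((1:Q),(1:Q))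
      - M ((0:Q),(1:Q)) ((0:Q),(1:Q)) - M ((0:Q),(1:Q)) ((1:Q),(0:Q)) = 0 := by
    linear_combination (25/12 : ℂ) * r1 + (4/3 : ℂ) * z2 + (4/3 : ℂ) * z3 - s3
  ring_nf at t1
  simp only [Complex.I_sq, neg_mul, mul_neg, neg_neg, one_mul] at t1
  have e2 : M ((0:Q),(0:Q)) ((0:Q),(0:Q)) - M ((0:Q),(0:Q)) ((1:Q),(1:Q))
      - M ((0:Q),(1:Q)) ((0:Q),(1:Q)) + M ((0:Q),(1:Q)) ((1:Q),(0:Q)) = 0 := by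
    refine mul_left_cancel₀ Complex.I_ne_zero ?_
    linear_combination (-25/12 : ℂ) * t1 + Complex.I * s3 + (4/3 : ℂ) * z2 - (4/3 : ℂ) * z3
  have key1 : M ((0:Q),(0:Q)) ((0:Q),(0:Q))
      = M ((0:Q),(0:Q)) ((1:Q),(1:Q)) + M ((0:Q),(1:Q)) ((0:Q),(1:Q)) := by
    linear_combination (e1 + e2) / 2
  have key2 : M ((0:Q),(1:Q)) ((1:Q),(0:Q)) = 0 := by
    linear_combination (e2 - e1) / 2
  refine ⟨M ((0:Q),(0:Q)) ((1:Q),(1:Q)), M ((0:Q),(1:Q)) ((0:Q),(1:Q)), ?_⟩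
  ext ⟨i, j⟩ ⟨k, l⟩
  fin_cases i <;> fin_cases j <;> fin_cases k <;> fin_cases l <;>
      simp only [Matrix.add_apply, Matrix.smul_apply, outer, Phi, Matrix.one_apply,
        smul_eq_mul, Prod.mk.injEq] <;> norm_num
  · linear_combination key1
  · exact z1
  · exact z2
  · exact z5
  · exact key2
  · exact z6
  · exact z7
  · linear_combination key2 - s3
  · linear_combination -s4
  · exact z8
  · linear_combination -s1
  · exact z3
  · exact z4
  · linear_combination key1 - s2
end
end
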